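/- arXiv:1005.1292 — 5 statements merged into one kernel-verified Lean document; each statement's English description precedes it below -/
import Mathlib

section
/- For the Broadcast Gossip Algorithm on a symmetric connected graph G, we have E[P(t)ᵀ Ω P(t)] = Ω − 2q(1−q)N⁻¹ L − q² N⁻² L², where Ω = I − N⁻¹ 1 1ᵀ. -/
/-!
Write `P v = 1 + q • B v`. Expanding the square, the mean of `(P v)ᵀ * Ω * P v` is
`Ω + (q / N) ((∑ B)ᵀ Ω + Ω ∑ B) + (q² / N) ∑ (B v)ᵀ Ω (B v)`. Here `∑ v, B v = -L`, and
`L Ω = Ω L = L` because the rows and (by symmetry) the columns of `L` sum to zero. Splitting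
`Ω = 1 - N⁻¹ J`, the sum `∑ (B v)ᵀ (B v)` is the Laplacian of `A ⊙ A` plus that of its
transpose, i.e. `2 L` for a symmetric 0/1 matrix, while the column sums of `B v` form the
`v`-th row of `L`, so that `∑ (B v)ᵀ J (B v) = Lᵀ L = L²`.
-/

open Matrix

namespace Matrix

section

variable {ι m n R : Type*} [Fintype ι] [CommRing R]

theorem transpose_mul_of_one_mul [Fintype m] (M : Matrix m n R) :
    Mᵀ * (of fun _ _ => 1 : Matrix m m R) * M = vecMulVec (1 ᵥ* M) (1 ᵥ* M) := by
  ext i j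
  simp [mul_apply, vecMulVec_apply, vecMul, dotProduct, Finset.sum_mul, Finset.mul_sum]

theorem sum_transpose_mul_of_one_mul [Fintype m] (M : ι → Matrix m n R) :
    ∑ v, (M v)ᵀ * (of fun _ _ => 1 : Matrix m m R) * M v
      = (of fun v => 1 ᵥ* M v)ᵀ * of fun v => 1 ᵥ* M v := by
  ext i j
  simp [sum_apply, transpose_mul_of_one_mul, vecMulVec_apply, mul_apply]

theorem sum_transpose_mul_mul_one_add_smul [Fintype n] [DecidableEq n] (Ω : Matrix n n R)
    (B : ι → Matrix n n R) (q : R) :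
    ∑ v, (1 + q • B v)ᵀ * Ω * (1 + q • B v) = Fintype.card ι • Ω
      + q • ((∑ v, B v)ᵀ * Ω + Ω * ∑ v, B v) + q ^ 2 • ∑ v, (B v)ᵀ * Ω * B v := by
  simp only [transpose_add, transpose_one, transpose_smul, add_mul, mul_add, Matrix.smul_mul,
    Matrix.mul_smul, one_mul, mul_one, Finset.sum_add_distrib, transpose_sum, Finset.sum_mul,
    Finset.mul_sum, ← Finset.smul_sum, Finset.sum_const, Finset.card_univ, smul_add, smul_smul,
    sq]
  abel

end

variable {n R : Type*} [Fintype n] [DecidableEq n] [CommRing R]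

def laplacian (A : Matrix n n R) : Matrix n n R :=
  diagonal (fun u => ∑ v, A u v) - A

/-- The broadcast matrix of node `v` is `1 + q • bgaIncrement A v`: every `u` moves its value
towards that of `v` by the fraction `q • A u v`. -/
def bgaIncrement (A : Matrix n n R) (v : n) : Matrix n n R :=
  ∑ u, A u v • (single u v (1 : R) - single u u 1)

variable (A : Matrix n n R)

theorem laplacian_apply (i j : n) :
    laplacian A i j = (if i = j then ∑ v, A i v else 0) - A i j := by
  simp [laplacian, diagonal_apply]

theorem laplacian_transpose (hA : Aᵀ = A) : (laplacian A)ᵀ = laplacian A := by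
  rw [laplacian, transpose_sub, diagonal_transpose, hA]

theorem laplacian_mul_of_one : laplacian A * of (fun _ _ => (1 : R)) = 0 := by
  ext i j
  simp [mul_apply, laplacian_apply, Finset.sum_sub_distrib]

theorem of_one_mul_laplacian (hA : Aᵀ = A) : of (fun _ _ => (1 : R)) * laplacian A = 0 := by
  rw [← transpose_transpose (of _ * _), transpose_mul, laplacian_transpose A hA]
  exact congrArg transpose (laplacian_mul_of_one A)

theorem bgaIncrement_apply (v i j : n) :
    bgaIncrement A v i j = (if j = v then A i v else 0) - (if i = j then A i v else 0) := by
  simp [bgaIncrement, sum_apply, single_apply, mul_sub, Finset.sum_sub_distrib, ite_and, eq_comm]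

theorem sum_bgaIncrement : ∑ v, bgaIncrement A v = -laplacian A := by
  ext i j
  simp [sum_apply, bgaIncrement_apply, laplacian_apply, Finset.sum_sub_distrib]

theorem one_vecMul_bgaIncrement (v : n) : 1 ᵥ* bgaIncrement A v = laplacian Aᵀ v := by
  ext i
  simp [vecMul, dotProduct, bgaIncrement_apply, laplacian_apply, Finset.sum_sub_distrib, eq_comm]

theorem sum_transpose_mul_bgaIncrement :
    ∑ v, (bgaIncrement A v)ᵀ * bgaIncrement A v = laplacian (A ⊙ A) + laplacian (A ⊙ A)ᵀ := by
  ext i j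
  simp only [sum_apply, mul_apply, transpose_apply, bgaIncrement_apply, laplacian_apply,
    add_apply, hadamard_apply, sub_mul, mul_sub, ite_mul, mul_ite, zero_mul, mul_zero,
    Finset.sum_sub_distrib, Finset.sum_ite_eq, Finset.sum_ite_eq', Finset.mem_univ, if_true,
    Finset.sum_ite_irrel, Finset.sum_const_zero]
  split_ifs <;> simp_all <;> ring

theorem sum_transpose_mul_of_one_mul_bgaIncrement :
    ∑ v, (bgaIncrement A v)ᵀ * of (fun _ _ => (1 : R)) * bgaIncrement A v
      = (laplacian Aᵀ)ᵀ * laplacian Aᵀ := by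
  rw [sum_transpose_mul_of_one_mul, funext (one_vecMul_bgaIncrement A)]
  rfl

end Matrix

theorem bga_mean_square_symmetric_general {N : ℕ} (hN : 0 < N)
    (A : Matrix (Fin N) (Fin N) ℝ)
    (hA01 : ∀ u v, A u v = 0 ∨ A u v = 1)
    (hAsymm : Aᵀ = A)
    (q : ℝ)
    (L : Matrix (Fin N) (Fin N) ℝ)
    (hL : L = Matrix.diagonal (fun u => ∑ v, A u v) - A)
    (P : Fin N → Matrix (Fin N) (Fin N) ℝ)
    (hP : ∀ v, P v = 1 + q • ∑ u, A u v •
      (Matrix.single u v (1:ℝ) - Matrix.single u u 1))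
    (Ω : Matrix (Fin N) (Fin N) ℝ)
    (hΩ : Ω = 1 - (N : ℝ)⁻¹ • Matrix.of (fun _ _ => (1:ℝ))) :
    (N : ℝ)⁻¹ • ∑ v, (P v)ᵀ * Ω * P v
      = Ω - (2 * q * (1 - q) / N) • L - (q ^ 2 / (N : ℝ) ^ 2) • (L * L) := by
  obtain rfl : L = laplacian A := hL
  obtain rfl : P = fun v => 1 + q • bgaIncrement A v := funext hP
  have hAA : A ⊙ A = A :=
    hadamard_self_eq_self_iff.2 fun u v => IsIdempotentElem.iff_eq_zero_or_one.2 (hA01 u v)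
  have hLsymm : (laplacian A)ᵀ = laplacian A := laplacian_transpose A hAsymm
  have hLΩ : laplacian A * Ω = laplacian A := by
    rw [hΩ, mul_sub, mul_one, Matrix.mul_smul, laplacian_mul_of_one, smul_zero, sub_zero]
  have hΩL : Ω * laplacian A = laplacian A := by
    rw [hΩ, sub_mul, one_mul, Matrix.smul_mul, of_one_mul_laplacian A hAsymm, smul_zero, sub_zero]
  have hsandwich : ∑ v, (bgaIncrement A v)ᵀ * Ω * bgaIncrement A v
      = ∑ v, (bgaIncrement A v)ᵀ * bgaIncrement A v
        - (N : ℝ)⁻¹ • ∑ v, (bgaIncrement A v)ᵀ * of (fun _ _ => (1 : ℝ)) * bgaIncrement A v := by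
    simp only [hΩ, mul_sub, sub_mul, mul_one, Matrix.mul_smul, Matrix.smul_mul,
      Finset.sum_sub_distrib, ← Finset.smul_sum]
  rw [sum_transpose_mul_mul_one_add_smul, sum_bgaIncrement, hsandwich,
    sum_transpose_mul_bgaIncrement, sum_transpose_mul_of_one_mul_bgaIncrement, hAA, hAsymm,
    transpose_neg, hLsymm, neg_mul, mul_neg, hLΩ, hΩL, Fintype.card_fin,
    ← Nat.cast_smul_eq_nsmul ℝ]
  have hN' : (N : ℝ) ≠ 0 := Nat.cast_ne_zero.mpr hN.ne'
  match_scalars <;> field_simp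
  ring

/-- For the BGA on a symmetric connected graph `G`,
`E[P(t)ᵀ Ω P(t)] = Ω − 2q(1−q)N⁻¹ L − q² N⁻² L²`, where `Ω = I − N⁻¹ 11ᵀ`. -/
theorem bga_mean_square_symmetric {N : ℕ} (hN : 0 < N)
    (A : Matrix (Fin N) (Fin N) ℝ)
    (hA01 : ∀ u v, A u v = 0 ∨ A u v = 1)
    (hAdiag : ∀ u, A u u = 0)
    (hAsymm : Aᵀ = A)
    (hconn : ∀ u v : Fin N, u ≠ v → Relation.TransGen (fun a b => A b a ≠ 0) u v)
    (q : ℝ) (hq : q ∈ Set.Ioo (0:ℝ) 1)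
    (L : Matrix (Fin N) (Fin N) ℝ)
    (hL : L = Matrix.diagonal (fun u => ∑ v, A u v) - A)
    (P : Fin N → Matrix (Fin N) (Fin N) ℝ)
    (hP : ∀ v, P v = 1 + q • ∑ u, A u v •
      (Matrix.single u v (1:ℝ) - Matrix.single u u 1))
    (Ω : Matrix (Fin N) (Fin N) ℝ)
    (hΩ : Ω = 1 - (N : ℝ)⁻¹ • Matrix.of (fun _ _ => (1:ℝ))) :
    (N : ℝ)⁻¹ • ∑ v, (P v)ᵀ * Ω * P v
      = Ω - (2 * q * (1 - q) / N) • L - (q ^ 2 / (N : ℝ) ^ 2) • (L * L) :=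
  bga_mean_square_symmetric_general hN A hA01 hAsymm q L hL P hP Ω hΩ
end

section
/- For the Broadcast Gossip Algorithm on the complete graph on N nodes, the rate of convergence equals (1−q)² and the bias matrix is B = (q/(2−q))·(1/N)·(I − 11ᵀ/N); in particular tr(B) = (q/(2−q))(1 − 1/N), which does not converge to 0 as N → ∞, so the algorithm is not asymptotically unbiased on complete graphs. -/
/-!
Write `J` for the all-ones matrix and `Ω = I - J/N`. The span of `I` and `J` is invariant under
the second-moment operator `L`; on it, `Ω` is an eigenvector of `L` with eigenvalue `(1 - q)²`
and `F = (Nq/(2 - q)) I + (2(1 - q)/(2 - q)) J` is a fixed point. Hence `Lᵗ Ω = (1 - q)²ᵗ Ω`, so the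
`t`-th root of `xᵀ Lᵗ Ω x / N` tends to `(1 - q)²` for every non-constant `x`; and since
`J = F - (Nq/(2 - q)) Ω`, the iterates `Lᵗ J` tend to `F`, giving
`B = (F - J)/N² = (q/(2 - q)) Ω/N`.
-/

open Matrix Filter Finset Topology

theorem Module.End.pow_apply_of_apply_eq_smul {R M : Type*} [CommSemiring R] [AddCommMonoid M]
    [Module R M] {f : Module.End R M} {μ : R} {x : M} (hx : f x = μ • x) (n : ℕ) :
    (f ^ n) x = μ ^ n • x := by
  induction n with
  | zero => simp
  | succ n ih => rw [pow_succ', Module.End.mul_apply, ih, map_smul, hx, smul_smul, pow_succ]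

theorem tendsto_mul_pow_rpow_inv {e r : ℝ} (he : 0 ≤ e) (hr : 0 ≤ r) :
    Tendsto (fun t : ℕ => (e * r ^ t) ^ (t : ℝ)⁻¹) atTop (𝓝 (if e = 0 then 0 else r)) := by
  split_ifs with he0
  · refine tendsto_const_nhds.congr' ?_
    filter_upwards [eventually_ne_atTop 0] with t ht
    simp [he0, Real.zero_rpow (inv_ne_zero (Nat.cast_ne_zero.mpr ht))]
  · have he_root : Tendsto (fun t : ℕ => e ^ (t : ℝ)⁻¹) atTop (𝓝 1) := by
      have := (Real.continuousAt_const_rpow he0).tendsto.comp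
        (tendsto_inv_atTop_zero.comp tendsto_natCast_atTop_atTop)
      rwa [Real.rpow_zero] at this
    have := he_root.mul_const r
    rw [one_mul] at this
    refine this.congr' ?_
    filter_upwards [eventually_ne_atTop 0] with t ht
    rw [Real.mul_rpow he (pow_nonneg hr t), Real.pow_rpow_inv_natCast hr ht]

theorem iSup_limsup_rpow_inv_eq_of_apply_eq_smul {ι : Type*} [Fintype ι]
    {f : Module.End ℝ (Matrix ι ι ℝ)} {Ω : Matrix ι ι ℝ} {r c : ℝ} (hr : 0 ≤ r) (hc : 0 < c)
    (hf : f Ω = r • Ω) (hΩ : ∀ x, 0 ≤ x ⬝ᵥ (Ω *ᵥ x)) (hΩpos : ∃ x, 0 < x ⬝ᵥ (Ω *ᵥ x)) :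
    ⨆ x : ι → ℝ, limsup (fun t : ℕ => (c * (x ⬝ᵥ ((f ^ t) Ω *ᵥ x))) ^ (t : ℝ)⁻¹) atTop = r := by
  have hlimsup : ∀ x : ι → ℝ,
      limsup (fun t : ℕ => (c * (x ⬝ᵥ ((f ^ t) Ω *ᵥ x))) ^ (t : ℝ)⁻¹) atTop
        = if c * (x ⬝ᵥ (Ω *ᵥ x)) = 0 then 0 else r := fun x => by
    refine Tendsto.limsup_eq ?_
    convert tendsto_mul_pow_rpow_inv (mul_nonneg hc.le (hΩ x)) hr using 3 with t
    rw [Module.End.pow_apply_of_apply_eq_smul hf, smul_mulVec, dotProduct_smul, smul_eq_mul]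
    ring
  simp_rw [hlimsup]
  have hle : ∀ x : ι → ℝ, (if c * (x ⬝ᵥ (Ω *ᵥ x)) = 0 then 0 else r) ≤ r := fun x => by
    split_ifs
    exacts [hr, le_rfl]
  obtain ⟨x₀, hx₀⟩ := hΩpos
  refine le_antisymm (ciSup_le hle) (le_ciSup_of_le ⟨r, ?_⟩ x₀ ?_)
  · rintro _ ⟨x, rfl⟩
    exact hle x
  · rw [if_neg (by positivity)]

noncomputable section

namespace BroadcastGossip

variable {ι : Type*}

def ones : Matrix ι ι ℝ := of fun _ _ => 1

section Step

variable [DecidableEq ι]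

/-- The update `x_u ← (1 - q) x_u + q x_v` of every node `u` when `v` broadcasts. -/
def broadcast (q : ℝ) (v : ι) : Matrix ι ι ℝ :=
  (1 - q) • 1 + q • of fun _ b => if b = v then 1 else 0

lemma broadcast_apply (q : ℝ) (v a b : ι) :
    broadcast q v a b = (1 - q) * (if a = b then 1 else 0) + q * (if b = v then 1 else 0) := by
  simp [broadcast, one_apply]

lemma one_add_smul_sum_single_eq_broadcast [Fintype ι] (q : ℝ) (v : ι) :
    1 + q • ∑ u, (of fun u v : ι => if u = v then (0 : ℝ) else 1) u v •
      (single u v (1 : ℝ) - single u u 1) = broadcast q v := by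
  ext a b
  rw [broadcast_apply]
  simp only [Matrix.add_apply, Matrix.smul_apply, Matrix.sum_apply, Matrix.sub_apply, one_apply,
    of_apply, smul_eq_mul, single_apply]
  rw [sum_eq_single a (fun u _ hu => by simp [hu]) (by simp)]
  by_cases hav : a = v <;> by_cases hab : a = b <;> by_cases hvb : v = b <;>
    simp_all [eq_comm, sub_eq_add_neg]

end Step

variable [Fintype ι]

/-- The operator `L(M) = E[Pᵀ M P]` for `P` drawn uniformly from the family `P`. -/
def momentOp (P : ι → Matrix ι ι ℝ) : Module.End ℝ (Matrix ι ι ℝ) where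
  toFun M := (Fintype.card ι : ℝ)⁻¹ • ∑ v, (P v)ᵀ * M * P v
  map_add' M M' := by simp only [Matrix.mul_add, Matrix.add_mul, sum_add_distrib, smul_add]
  map_smul' c M := by
    simp only [Matrix.mul_smul, Matrix.smul_mul, ← smul_sum, smul_comm c, RingHom.id_apply]

lemma momentOp_apply (P : ι → Matrix ι ι ℝ) (M : Matrix ι ι ℝ) :
    momentOp P M = (Fintype.card ι : ℝ)⁻¹ • ∑ v, (P v)ᵀ * M * P v := rfl

variable [DecidableEq ι]

def centering : Matrix ι ι ℝ := 1 - (Fintype.card ι : ℝ)⁻¹ • ones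

/-- `N² E[ρρᵀ]` in the paper's notation: the fixed point of `momentOp (broadcast q)` whose
entries sum to `N²`. -/
def stationaryMoment (q : ℝ) : Matrix ι ι ℝ :=
  (Fintype.card ι * q / (2 - q)) • 1 + (2 * (1 - q) / (2 - q)) • ones

section Moments

variable [Nonempty ι] (q : ℝ)

lemma momentOp_broadcast_one :
    momentOp (broadcast q) (1 : Matrix ι ι ℝ)
      = ((1 - q) ^ 2 + q ^ 2) • 1 + (2 * q * (1 - q) / Fintype.card ι) • ones := by
  ext i j
  simp only [momentOp_apply, ones, Matrix.smul_apply, Matrix.sum_apply, mul_apply,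
    transpose_apply, Matrix.add_apply, one_apply, of_apply, broadcast_apply, smul_eq_mul]
  by_cases h : i = j <;>
    simp [h, mul_add, add_mul, ite_mul, mul_ite, sum_add_distrib, sum_ite_eq, eq_comm] <;>
    field_simp <;> ring

lemma momentOp_broadcast_ones :
    momentOp (broadcast q) (ones : Matrix ι ι ℝ)
      = (Fintype.card ι * q ^ 2) • 1 + ((1 - q) ^ 2 + 2 * q * (1 - q)) • ones := by
  ext i j
  simp only [momentOp_apply, ones, Matrix.smul_apply, Matrix.sum_apply, mul_apply,
    transpose_apply, Matrix.add_apply, one_apply, of_apply, broadcast_apply, smul_eq_mul]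
  by_cases h : i = j <;>
    simp [h, mul_add, add_mul, ite_mul, mul_ite, sum_add_distrib, sum_ite_eq, eq_comm] <;>
    field_simp <;> ring

lemma momentOp_broadcast_centering :
    momentOp (broadcast q) (centering : Matrix ι ι ℝ) = (1 - q) ^ 2 • centering := by
  have hn : (Fintype.card ι : ℝ) ≠ 0 := by positivity
  rw [centering, map_sub, map_smul, momentOp_broadcast_one, momentOp_broadcast_ones]
  match_scalars <;> field_simp <;> ring

variable {q}

lemma momentOp_broadcast_stationaryMoment (hq : q ≠ 2) :
    momentOp (broadcast q) (stationaryMoment q : Matrix ι ι ℝ) = stationaryMoment q := by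
  have hn : (Fintype.card ι : ℝ) ≠ 0 := by positivity
  have h2q : 2 - q ≠ 0 := sub_ne_zero.mpr (Ne.symm hq)
  rw [stationaryMoment, map_add, map_smul, map_smul, momentOp_broadcast_one,
    momentOp_broadcast_ones]
  match_scalars <;> field_simp <;> ring

lemma ones_eq_stationaryMoment_sub (hq : q ≠ 2) :
    (ones : Matrix ι ι ℝ)
      = stationaryMoment q - (Fintype.card ι * q / (2 - q)) • centering := by
  have hn : (Fintype.card ι : ℝ) ≠ 0 := by positivity
  have h2q : 2 - q ≠ 0 := sub_ne_zero.mpr (Ne.symm hq)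
  rw [stationaryMoment, centering]
  match_scalars <;> field_simp <;> ring

end Moments

lemma dotProduct_centering_mulVec [Nonempty ι] (x : ι → ℝ) :
    x ⬝ᵥ (centering *ᵥ x) = ∑ i, (x i - (Fintype.card ι : ℝ)⁻¹ * ∑ j, x j) ^ 2 := by
  have hn : (Fintype.card ι : ℝ) ≠ 0 := by positivity
  simp only [centering, ones, sub_mulVec, one_mulVec, smul_mulVec, dotProduct_sub,
    dotProduct_smul]
  simp only [dotProduct, mulVec, of_apply, one_mul, smul_eq_mul, sub_sq, sum_add_distrib,
    sum_sub_distrib, sum_const, card_univ, nsmul_eq_mul, ← sum_mul, ← mul_sum]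
  field_simp
  ring

lemma centering_trace [Nonempty ι] : (centering : Matrix ι ι ℝ).trace = Fintype.card ι - 1 := by
  have hn : (Fintype.card ι : ℝ) ≠ 0 := by positivity
  simp [centering, ones, trace, hn]

lemma exists_dotProduct_centering_mulVec_pos [Nontrivial ι] :
    ∃ x : ι → ℝ, 0 < x ⬝ᵥ (centering *ᵥ x) := by
  obtain ⟨i, j, hij⟩ := exists_pair_ne ι
  refine ⟨Pi.single i 1, ?_⟩
  rw [dotProduct_centering_mulVec]
  refine sum_pos' (fun _ _ => sq_nonneg _) ⟨j, mem_univ j, ?_⟩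
  simp [Pi.single_apply, hij.symm]
  exact pow_pos (Nat.cast_pos.mpr Fintype.card_pos) 2

lemma tendsto_bias_broadcast [Nonempty ι] {q : ℝ} (hq0 : 0 < q) (hq2 : q < 2) :
    Tendsto (fun t : ℕ => ((Fintype.card ι : ℝ) ^ 2)⁻¹ • (momentOp (broadcast q) ^ t) ones
        - ((Fintype.card ι : ℝ) ^ 2)⁻¹ • ones) atTop
      (𝓝 ((q / (2 - q)) • ((Fintype.card ι : ℝ)⁻¹ • (centering : Matrix ι ι ℝ)))) := by
  set n : ℝ := (Fintype.card ι : ℝ)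
  set c : ℝ := n * q / (2 - q)
  have hn : n ≠ 0 := by positivity
  have hq_ne_two : q ≠ 2 := hq2.ne
  have hpow : ∀ t : ℕ, (momentOp (broadcast q) ^ t) (ones : Matrix ι ι ℝ)
      = stationaryMoment q - (c * ((1 - q) ^ 2) ^ t) • centering := fun t => by
    conv_lhs => rw [ones_eq_stationaryMoment_sub hq_ne_two]
    rw [map_sub, map_smul,
      Module.End.pow_apply_of_apply_eq_smul (μ := 1) (by
        rw [one_smul]; exact momentOp_broadcast_stationaryMoment hq_ne_two),
      Module.End.pow_apply_of_apply_eq_smul (momentOp_broadcast_centering q), one_pow, one_smul,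
      smul_smul]
  have hr : Tendsto (fun t : ℕ => ((1 - q) ^ 2) ^ t) atTop (𝓝 0) :=
    tendsto_pow_atTop_nhds_zero_of_lt_one (sq_nonneg _) (by nlinarith)
  have hlim := (((hr.const_sub 1).const_mul c).smul_const (centering : Matrix ι ι ℝ)).const_smul
    (n ^ 2)⁻¹
  convert hlim using 1
  · ext1 t
    rw [hpow, ones_eq_stationaryMoment_sub hq_ne_two (ι := ι)]
    match_scalars <;> ring
  · congr 1
    match_scalars
    simp only [c, sub_zero, mul_one]
    field_simp

lemma iSup_limsup_broadcast_rate [Nontrivial ι] (q : ℝ) :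
    ⨆ x : ι → ℝ, limsup (fun t : ℕ => ((Fintype.card ι : ℝ)⁻¹ *
      (x ⬝ᵥ ((momentOp (broadcast q) ^ t) centering *ᵥ x))) ^ (t : ℝ)⁻¹) atTop = (1 - q) ^ 2 :=
  iSup_limsup_rpow_inv_eq_of_apply_eq_smul (sq_nonneg _) (by positivity)
    (momentOp_broadcast_centering q)
    (fun x => by rw [dotProduct_centering_mulVec]; positivity)
    exists_dotProduct_centering_mulVec_pos

end BroadcastGossip

end

open BroadcastGossip

/-- For the BGA on the complete graph on `N` nodes, the rate of convergence
equals `(1−q)²`, the bias matrix is `B = (q/(2−q))·(1/N)·(I − 11ᵀ/N)`, so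
`tr(B) = (q/(2−q))(1 − 1/N)`, which does not converge to `0` as `N → ∞`:
the BGA is not asymptotically unbiased on complete graphs. -/
theorem bga_complete_graph_rate_and_bias {N : ℕ} (hN : 2 ≤ N)
    (q : ℝ) (hq : q ∈ Set.Ioo (0:ℝ) 1)
    (A : Matrix (Fin N) (Fin N) ℝ)
    (hA : A = Matrix.of (fun u v => if u = v then (0:ℝ) else 1))
    (P : Fin N → Matrix (Fin N) (Fin N) ℝ)
    (hP : ∀ v, P v = 1 + q • ∑ u, A u v •
      (Matrix.single u v (1:ℝ) - Matrix.single u u 1))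
    (J : Matrix (Fin N) (Fin N) ℝ) (hJ : J = Matrix.of (fun _ _ => (1:ℝ)))
    (Ω : Matrix (Fin N) (Fin N) ℝ) (hΩ : Ω = 1 - (N : ℝ)⁻¹ • J)
    (Lop : Matrix (Fin N) (Fin N) ℝ → Matrix (Fin N) (Fin N) ℝ)
    (hLop : ∀ M, Lop M = (N : ℝ)⁻¹ • ∑ v, (P v)ᵀ * M * P v)
    (R : ℝ)
    (hR : R = ⨆ x0 : Fin N → ℝ, Filter.limsup
      (fun t : ℕ => ((N : ℝ)⁻¹ * (x0 ⬝ᵥ ((Lop^[t] Ω).mulVec x0))) ^ ((t : ℝ)⁻¹))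
      Filter.atTop)
    (B : Matrix (Fin N) (Fin N) ℝ)
    (hB : Filter.Tendsto
      (fun t : ℕ => ((N : ℝ) ^ 2)⁻¹ • Lop^[t] J - ((N : ℝ) ^ 2)⁻¹ • J)
      Filter.atTop (nhds B)) :
    R = (1 - q) ^ 2 ∧
    B = (q / (2 - q)) • ((N : ℝ)⁻¹ • (1 - (N : ℝ)⁻¹ • J)) ∧
    B.trace = (q / (2 - q)) * (1 - (N : ℝ)⁻¹) ∧
    ¬ Filter.Tendsto (fun n : ℕ => (q / (2 - q)) * (1 - (n : ℝ)⁻¹))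
        Filter.atTop (nhds 0) := by
  obtain ⟨hq0, hq1⟩ := hq
  have : Nontrivial (Fin N) := Fin.nontrivial_iff_two_le.mpr hN
  have hPb : P = broadcast q :=
    funext fun v => by rw [hP, hA, one_add_smul_sum_single_eq_broadcast]
  have hLop_pow : ∀ t, Lop^[t] = ⇑(momentOp (broadcast q) ^ t) := fun t => by
    have hL : Lop = momentOp (broadcast q) :=
      funext fun M => by rw [hLop, momentOp_apply, hPb, Fintype.card_fin]
    rw [hL, Module.End.coe_pow]
  have hJ1 : J = ones := hJ
  have hΩc : Ω = centering := by rw [hΩ, centering, hJ1, Fintype.card_fin]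
  have hBval : B = (q / (2 - q)) • ((N : ℝ)⁻¹ • (1 - (N : ℝ)⁻¹ • J)) := by
    refine tendsto_nhds_unique hB ?_
    have := tendsto_bias_broadcast (ι := Fin N) hq0 (by linarith)
    rw [Fintype.card_fin, ← hΩc, hΩ, ← hJ1] at this
    simpa only [hLop_pow] using this
  refine ⟨?_, hBval, ?_, ?_⟩
  · have := iSup_limsup_broadcast_rate (ι := Fin N) q
    rw [Fintype.card_fin, ← hΩc] at this
    simpa only [hR, hLop_pow] using this
  · rw [hBval, ← hΩ, hΩc, trace_smul, trace_smul, centering_trace, Fintype.card_fin, smul_eq_mul,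
      smul_eq_mul]
    field_simp
  · intro h0
    have hlim : Tendsto (fun n : ℕ => q / (2 - q) * (1 - (n : ℝ)⁻¹)) atTop (𝓝 (q / (2 - q))) := by
      simpa using
        (tendsto_inv_atTop_nhds_zero_nat (𝕜 := ℝ)).const_sub 1 |>.const_mul (q / (2 - q))
    exact (div_pos hq0 (by linarith)).ne' (tendsto_nhds_unique hlim h0)
end

section
/- On the complete graph on N nodes, the Collision Broadcast Gossip Algorithm has rate of convergence R = 1 − q(2−q)·N p(1−p)^{N−1} and bias matrix B = (q/(2−q))·(1/N)·(I − 11ᵀ/N). -/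
/-!
The second-moment map `L M = E[Wᵀ M W]` of one CBGA step on `K_N` (with `W = P_v`, the broadcast
from `v`, with probability `r = p(1-p)^(N-1)` for each `v`, and `W = I` otherwise) preserves the
span of `I` and `J = 11ᵀ`. The centering matrix `Ω = I - J/N` is an eigenvector,
`L Ω = μ Ω` with `μ = 1 - q(2-q)Nr`, and `L J = J + q²N²r Ω`. Hence `Lᵗ Ω = μᵗ Ω`, so
`E[d(t)] = μᵗ d(0)` and the rate is `μ` (attained by any non-consensus start), while
`Lᵗ J = J + q²N²r (1 + μ + ⋯ + μᵗ⁻¹) Ω`, whose geometric series gives the bias `q/(2-q) · Ω/N`.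
-/

open Matrix Filter Finset Topology

lemma natCast_mul_mul_one_sub_pow_pred_le_one {p : ℝ} (hp0 : 0 ≤ p) (hp1 : p ≤ 1) (N : ℕ) :
    N * p * (1 - p) ^ (N - 1) ≤ 1 := by
  rcases N.eq_zero_or_pos with rfl | hN
  · simp
  have hterm := Finset.single_le_sum (s := range (N + 1))
    (f := fun k => p ^ k * (1 - p) ^ (N - k) * (N.choose k : ℝ))
    (fun k _ => by
      have : 0 ≤ 1 - p := by linarith
      positivity)
    (mem_range.2 (by omega : 1 < N + 1))
  rw [← add_pow, add_sub_cancel, one_pow] at hterm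
  simpa [mul_comm, mul_left_comm, mul_assoc] using hterm

namespace LinearMap

variable {R M : Type*} [AddCommMonoid M]

lemma iterate_apply_of_apply_eq_smul [Semiring R] [Module R M] (f : M →ₗ[R] M) {y : M} {μ : R}
    (hy : f y = μ • y) (t : ℕ) : f^[t] y = μ ^ t • y := by
  induction t with
  | zero => simp
  | succ t ih => rw [Function.iterate_succ_apply', ih, map_smul, hy, smul_smul, pow_succ]

lemma iterate_apply_of_apply_eq_add_smul [CommSemiring R] [Module R M] (f : M →ₗ[R] M)
    {x y : M} {μ c : R} (hy : f y = μ • y) (hx : f x = x + c • y) (t : ℕ) :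
    f^[t] x = x + (c * ∑ i ∈ Finset.range t, μ ^ i) • y := by
  induction t with
  | zero => simp
  | succ t ih =>
    rw [Function.iterate_succ_apply', ih, map_add, map_smul, hx, hy, geom_sum_succ, smul_smul,
      add_assoc, ← add_smul]
    congr 2
    ring

end LinearMap

lemma tendsto_pow_mul_rpow_inv {μ c : ℝ} (hμ : 0 ≤ μ) (hc : 0 < c) :
    Tendsto (fun t : ℕ => (μ ^ t * c) ^ (t : ℝ)⁻¹) atTop (𝓝 μ) := by
  have hroot : Tendsto (fun t : ℕ => c ^ (t : ℝ)⁻¹) atTop (𝓝 1) := by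
    simpa [Function.comp_def] using ((Real.continuousAt_const_rpow hc.ne').tendsto.comp
      (tendsto_inv_atTop_zero.comp tendsto_natCast_atTop_atTop))
  refine (by simpa using hroot.const_mul μ : Tendsto _ _ (𝓝 μ)).congr' ?_
  filter_upwards [eventually_ne_atTop 0] with t ht
  rw [Real.mul_rpow (by positivity) hc.le, ← Real.rpow_natCast, ← Real.rpow_mul hμ,
    mul_inv_cancel₀ (by exact_mod_cast ht), Real.rpow_one]

lemma limsup_pow_mul_rpow_inv_le {μ c : ℝ} (hμ : 0 ≤ μ) (hc : 0 ≤ c) :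
    limsup (fun t : ℕ => (μ ^ t * c) ^ (t : ℝ)⁻¹) atTop ≤ μ := by
  rcases hc.eq_or_lt with rfl | hc
  · have hzero : Tendsto (fun t : ℕ => (μ ^ t * 0) ^ (t : ℝ)⁻¹) atTop (𝓝 0) :=
      tendsto_const_nhds.congr' <| by
        filter_upwards [eventually_ne_atTop 0] with t ht
        rw [mul_zero, Real.zero_rpow (by simpa using ht)]
    exact hzero.limsup_eq.le.trans hμ
  · exact (tendsto_pow_mul_rpow_inv hμ hc).limsup_eq.le

lemma iSup_limsup_pow_mul_rpow_inv {ι : Type*} {μ : ℝ} (c : ι → ℝ) (hμ : 0 ≤ μ)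
    (hc : ∀ i, 0 ≤ c i) {i₀ : ι} (hi₀ : 0 < c i₀) :
    ⨆ i, limsup (fun t : ℕ => (μ ^ t * c i) ^ (t : ℝ)⁻¹) atTop = μ := by
  have : Nonempty ι := ⟨i₀⟩
  refine ciSup_eq_of_forall_le_of_forall_lt_exists_gt
    (fun i => limsup_pow_mul_rpow_inv_le hμ (hc i)) fun w hw => ⟨i₀, ?_⟩
  rwa [(tendsto_pow_mul_rpow_inv hμ hi₀).limsup_eq]

noncomputable section

variable {n : Type*} [Fintype n] [DecidableEq n]

local notation "𝟙" => (Matrix.of fun _ _ => (1 : ℝ) : Matrix n n ℝ)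

/-- Row `u ≠ v` performs `x_u ← (1 - q) x_u + q x_v`; row `v` is the unit row. -/
def broadcastMatrix (q : ℝ) (v : n) : Matrix n n ℝ :=
  of fun i j => (if i = j then 1 - q else 0) + if j = v then q else 0

variable (n) in
def centeringMatrix : Matrix n n ℝ :=
  1 - (Fintype.card n : ℝ)⁻¹ • 𝟙

def secondMomentMap (P : n → Matrix n n ℝ) (r : ℝ) : Matrix n n ℝ →ₗ[ℝ] Matrix n n ℝ where
  toFun M := (1 - Fintype.card n * r) • M + r • ∑ v, (P v)ᵀ * M * P v
  map_add' M M' := by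
    simp only [Matrix.mul_add, Matrix.add_mul, sum_add_distrib]
    module
  map_smul' c M := by
    simp only [Matrix.mul_smul, Matrix.smul_mul, ← smul_sum, RingHom.id_apply]
    module

omit [DecidableEq n] in
lemma secondMomentMap_apply (P : n → Matrix n n ℝ) (r : ℝ) (M : Matrix n n ℝ) :
    secondMomentMap P r M = (1 - Fintype.card n * r) • M + r • ∑ v, (P v)ᵀ * M * P v := rfl

lemma one_add_smul_sum_single_eq_broadcastMatrix (q : ℝ) (v : n) :
    1 + q • ∑ u, (if u = v then (0 : ℝ) else 1) • (single u v (1 : ℝ) - single u u 1) =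
      broadcastMatrix q v := by
  ext i j
  simp only [Matrix.add_apply, Matrix.smul_apply, Matrix.sum_apply, Matrix.sub_apply,
    Matrix.one_apply, single_apply, broadcastMatrix, of_apply, smul_eq_mul]
  rw [sum_eq_single i (fun u _ hui => by simp [hui]) (by simp)]
  split_ifs <;> grind

lemma sum_broadcastMatrix_apply (q : ℝ) (v j : n) :
    ∑ k, broadcastMatrix q v k j = 1 - q + if j = v then Fintype.card n * q else 0 := by
  simp [broadcastMatrix, sum_add_distrib, mul_comm]

lemma sum_broadcastMatrix_apply_mul_apply (q : ℝ) (v i j : n) :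
    ∑ k, broadcastMatrix q v k i * broadcastMatrix q v k j =
      (if i = j then (1 - q) ^ 2 else 0) + (if j = v then (1 - q) * q else 0)
      + (if i = v then q * (1 - q) else 0)
      + (if i = v ∧ j = v then Fintype.card n * q ^ 2 else 0) := by
  simp only [broadcastMatrix, of_apply, mul_add, mul_ite, add_mul, ite_mul, zero_mul, mul_zero, sum_add_distrib, sum_ite_eq',
    mem_univ, ↓reduceIte, sum_ite_irrel, sum_const, card_univ, nsmul_eq_mul]
  split_ifs <;> grind

lemma sum_transpose_broadcastMatrix_mul_self (q : ℝ) :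
    ∑ v, (broadcastMatrix q v)ᵀ * broadcastMatrix q v =
      (Fintype.card n * ((1 - q) ^ 2 + q ^ 2)) • 1 + (2 * q * (1 - q)) • 𝟙 := by
  ext i j
  simp only [Matrix.sum_apply, mul_apply, transpose_apply, sum_broadcastMatrix_apply_mul_apply]
  simp only [ite_and, sum_add_distrib, sum_ite_irrel, sum_const, card_univ, nsmul_eq_mul,
    sum_ite_eq, mem_univ, ↓reduceIte, smul_of, Matrix.add_apply,
    Matrix.smul_apply, Matrix.one_apply, smul_eq_mul, mul_ite, mul_one, mul_zero, of_apply,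
    Pi.smul_apply]
  split_ifs <;> grind

lemma sum_transpose_broadcastMatrix_mul_allOnes_mul (q : ℝ) :
    ∑ v, (broadcastMatrix q v)ᵀ * 𝟙 * broadcastMatrix q v =
      (Fintype.card n * (1 - q ^ 2)) • 𝟙 + (q ^ 2 * Fintype.card n ^ 2) • 1 := by
  ext i j
  simp only [Matrix.sum_apply, mul_apply, transpose_apply, of_apply, mul_one, ← mul_sum,
    sum_broadcastMatrix_apply]
  simp only [mul_add, add_mul, ite_mul, zero_mul, mul_ite, mul_zero, sum_add_distrib, sum_const,
    card_univ, nsmul_eq_mul, sum_ite_eq, mem_univ, ↓reduceIte, smul_of, Matrix.add_apply, of_apply,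
    Pi.smul_apply, smul_eq_mul, mul_one, Matrix.smul_apply, Matrix.one_apply]
  split_ifs <;> grind

lemma dotProduct_centeringMatrix_mulVec (x : n → ℝ) :
    x ⬝ᵥ (centeringMatrix n *ᵥ x) = ∑ i, x i ^ 2 - (Fintype.card n : ℝ)⁻¹ * (∑ i, x i) ^ 2 := by
  have hallOnes : x ⬝ᵥ (𝟙 *ᵥ x) = (∑ i, x i) ^ 2 := by
    simp [dotProduct, mulVec, sq, sum_mul]
  rw [centeringMatrix, sub_mulVec, one_mulVec, dotProduct_sub, smul_mulVec, dotProduct_smul,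
    hallOnes, smul_eq_mul]
  simp [dotProduct, sq]

lemma dotProduct_centeringMatrix_mulVec_single (i : n) :
    Pi.single i 1 ⬝ᵥ (centeringMatrix n *ᵥ Pi.single i 1) = 1 - (Fintype.card n : ℝ)⁻¹ := by
  simp [centeringMatrix]

variable [Nonempty n]

lemma dotProduct_centeringMatrix_mulVec_nonneg (x : n → ℝ) :
    0 ≤ x ⬝ᵥ (centeringMatrix n *ᵥ x) := by
  have hcard : (0 : ℝ) < Fintype.card n := by positivity
  rw [dotProduct_centeringMatrix_mulVec, sub_nonneg, inv_mul_le_iff₀ hcard]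
  simpa using sq_sum_le_card_mul_sum_sq (s := univ) (f := x)

lemma secondMomentMap_broadcastMatrix_allOnes (q r : ℝ) :
    secondMomentMap (broadcastMatrix q) r 𝟙 =
      𝟙 + (q ^ 2 * Fintype.card n ^ 2 * r) • centeringMatrix n := by
  have hcard : (Fintype.card n : ℝ) ≠ 0 := by positivity
  rw [secondMomentMap_apply, sum_transpose_broadcastMatrix_mul_allOnes_mul, centeringMatrix]
  match_scalars
  · field_simp
    ring
  · field_simp

lemma secondMomentMap_broadcastMatrix_centeringMatrix (q r : ℝ) :
    secondMomentMap (broadcastMatrix q) r (centeringMatrix n) =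
      (1 - q * (2 - q) * (Fintype.card n * r)) • centeringMatrix n := by
  have hcard : (Fintype.card n : ℝ) ≠ 0 := by positivity
  have hone : secondMomentMap (broadcastMatrix q) r 1 =
      (1 - Fintype.card n * r + r * Fintype.card n * ((1 - q) ^ 2 + q ^ 2)) • 1
        + (r * (2 * q * (1 - q))) • 𝟙 := by
    simp only [secondMomentMap_apply, Matrix.mul_one, sum_transpose_broadcastMatrix_mul_self]
    module
  rw [centeringMatrix, map_sub, map_smul, hone, secondMomentMap_broadcastMatrix_allOnes,
    centeringMatrix]
  match_scalars <;> field_simp <;> ring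

variable (q r : ℝ)

theorem iSup_limsup_iterate_secondMomentMap_centeringMatrix [Nontrivial n] (hr0 : 0 ≤ r)
    (hr1 : Fintype.card n * r ≤ 1) :
    ⨆ x : n → ℝ, limsup (fun t : ℕ => ((Fintype.card n : ℝ)⁻¹ *
        (x ⬝ᵥ ((secondMomentMap (broadcastMatrix q) r)^[t] (centeringMatrix n) *ᵥ x))) ^
          (t : ℝ)⁻¹) atTop =
      1 - q * (2 - q) * (Fintype.card n * r) := by
  set μ := 1 - q * (2 - q) * (Fintype.card n * r)
  have hμ : 0 ≤ μ := by
    nlinarith [mul_nonneg (sq_nonneg (1 - q)) (by positivity : 0 ≤ Fintype.card n * r)]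
  have hiterate : ∀ (x : n → ℝ) (t : ℕ), (Fintype.card n : ℝ)⁻¹ *
      (x ⬝ᵥ ((secondMomentMap (broadcastMatrix q) r)^[t] (centeringMatrix n) *ᵥ x)) =
        μ ^ t * ((Fintype.card n : ℝ)⁻¹ * (x ⬝ᵥ (centeringMatrix n *ᵥ x))) := by
    intro x t
    rw [LinearMap.iterate_apply_of_apply_eq_smul _
      (secondMomentMap_broadcastMatrix_centeringMatrix q r), smul_mulVec, dotProduct_smul,
      smul_eq_mul]
    ring
  simp_rw [hiterate]
  obtain ⟨i⟩ := ‹Nonempty n›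
  refine iSup_limsup_pow_mul_rpow_inv _ hμ (fun x => ?_) (i₀ := Pi.single i 1) ?_
  · have := dotProduct_centeringMatrix_mulVec_nonneg x
    positivity
  · have hcard : (1 : ℝ) < Fintype.card n := by exact_mod_cast Fintype.one_lt_card
    rw [dotProduct_centeringMatrix_mulVec_single]
    exact mul_pos (by positivity) (sub_pos.2 (inv_lt_one_of_one_lt₀ hcard))

theorem tendsto_iterate_secondMomentMap_allOnes (hq0 : 0 < q) (hq2 : q < 2) (hr0 : 0 < r)
    (hr1 : Fintype.card n * r ≤ 1) :
    Tendsto (fun t : ℕ => ((Fintype.card n : ℝ) ^ 2)⁻¹ •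
        (secondMomentMap (broadcastMatrix q) r)^[t] 𝟙 - ((Fintype.card n : ℝ) ^ 2)⁻¹ • 𝟙) atTop
      (𝓝 ((q / (2 - q)) • ((Fintype.card n : ℝ)⁻¹ • centeringMatrix n))) := by
  set N : ℝ := (Fintype.card n : ℝ)
  have hN : 0 < N := by positivity
  set μ := 1 - q * (2 - q) * (N * r)
  have hμ0 : 0 ≤ μ := by nlinarith [mul_nonneg (sq_nonneg (1 - q)) (by positivity : 0 ≤ N * r)]
  have h2q : 0 < 2 - q := by linarith
  have hμ1 : μ < 1 := by
    have : 0 < q * (2 - q) * (N * r) := by positivity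
    linarith
  have hgeom := (hasSum_geometric_of_lt_one hμ0 hμ1).tendsto_sum_nat
  have hiterate : ∀ t : ℕ, (N ^ 2)⁻¹ • (secondMomentMap (broadcastMatrix q) r)^[t] 𝟙
      - (N ^ 2)⁻¹ • 𝟙 =
        ((N ^ 2)⁻¹ * (q ^ 2 * N ^ 2 * r) * ∑ i ∈ range t, μ ^ i) • centeringMatrix n := by
    intro t
    rw [LinearMap.iterate_apply_of_apply_eq_add_smul _
      (secondMomentMap_broadcastMatrix_centeringMatrix q r)
      (secondMomentMap_broadcastMatrix_allOnes q r)]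
    module
  simp_rw [hiterate]
  convert (hgeom.const_mul ((N ^ 2)⁻¹ * (q ^ 2 * N ^ 2 * r))).smul_const (centeringMatrix n)
    using 2
  rw [smul_smul, show 1 - μ = q * (2 - q) * (N * r) by ring]
  field_simp

end

/-- On the complete graph on `N` nodes, the Collision Broadcast Gossip
Algorithm (each node activates independently with probability `p`; a broadcast succeeds
iff exactly one node is active, which happens with probability `N p (1−p)^{N−1}`) has
rate of convergence `R = 1 − q(2−q)·N p(1−p)^{N−1}` and bias matrix
`B = (q/(2−q))·(1/N)·(I − 11ᵀ/N)`. -/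
theorem cbga_complete_graph_rate_and_bias {N : ℕ} (hN : 2 ≤ N)
    (p q : ℝ) (hp : p ∈ Set.Ioo (0:ℝ) 1) (hq : q ∈ Set.Ioo (0:ℝ) 1)
    (Pb : Fin N → Matrix (Fin N) (Fin N) ℝ)
    (hPb : ∀ v, Pb v = 1 + q • ∑ u, (if u = v then (0:ℝ) else 1) •
      (Matrix.single u v (1:ℝ) - Matrix.single u u 1))
    (J : Matrix (Fin N) (Fin N) ℝ) (hJ : J = Matrix.of (fun _ _ => (1:ℝ)))
    (Ω : Matrix (Fin N) (Fin N) ℝ) (hΩ : Ω = 1 - (N : ℝ)⁻¹ • J)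
    (Lop : Matrix (Fin N) (Fin N) ℝ → Matrix (Fin N) (Fin N) ℝ)
    (hLop : ∀ M, Lop M = (1 - N * p * (1 - p) ^ (N - 1)) • M
      + (p * (1 - p) ^ (N - 1)) • ∑ v, (Pb v)ᵀ * M * Pb v)
    (R : ℝ)
    (hR : R = ⨆ x0 : Fin N → ℝ, Filter.limsup
      (fun t : ℕ => ((N : ℝ)⁻¹ * (x0 ⬝ᵥ ((Lop^[t] Ω).mulVec x0))) ^ ((t : ℝ)⁻¹))
      Filter.atTop)
    (B : Matrix (Fin N) (Fin N) ℝ)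
    (hB : Filter.Tendsto
      (fun t : ℕ => ((N : ℝ) ^ 2)⁻¹ • Lop^[t] J - ((N : ℝ) ^ 2)⁻¹ • J)
      Filter.atTop (nhds B)) :
    R = 1 - q * (2 - q) * (N * p * (1 - p) ^ (N - 1)) ∧
    B = (q / (2 - q)) • ((N : ℝ)⁻¹ • (1 - (N : ℝ)⁻¹ • J)) := by
  obtain ⟨hp0, hp1⟩ := hp
  obtain ⟨hq0, hq1⟩ := hq
  have : Nontrivial (Fin N) := Fin.nontrivial_iff_two_le.2 hN
  set r := p * (1 - p) ^ (N - 1)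
  have hr0 : 0 < r := by
    have : 0 < 1 - p := by linarith
    positivity
  have hr1 : (N : ℝ) * r ≤ 1 := by
    simpa only [r, mul_assoc] using natCast_mul_mul_one_sub_pow_pred_le_one hp0.le hp1.le N
  have hL : Lop = secondMomentMap (broadcastMatrix q) r := by
    funext M
    simp only [hLop, secondMomentMap_apply, Fintype.card_fin, hPb,
      one_add_smul_sum_single_eq_broadcastMatrix, r, mul_assoc]
  have hΩ' : Ω = centeringMatrix (Fin N) := by rw [hΩ, hJ, centeringMatrix, Fintype.card_fin]
  subst hL hΩ' hJ
  have hrate := iSup_limsup_iterate_secondMomentMap_centeringMatrix q r hr0.le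
    (by rwa [Fintype.card_fin])
  have hbias := tendsto_iterate_secondMomentMap_allOnes q r hq0 (by linarith) hr0
    (by rwa [Fintype.card_fin])
  simp only [Fintype.card_fin] at hrate hbias
  refine ⟨by rw [hR, hrate, mul_assoc (N : ℝ) p], tendsto_nhds_unique hB ?_⟩
  simpa only [centeringMatrix, Fintype.card_fin] using hbias
end

section
/- If C is a Cayley matrix over an Abelian group G (i.e., C_{hg} = π_{h−g} for some generating vector π), and L is the mean-square operator L(M) = E[P(t)ᵀ M P(t)] for the BGA or CBGA on a Cayley graph over G, then L(C) is also a Cayley matrix over G. -/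
open Matrix Finset

/-!
Cayley matrices over `G` are exactly the circulant matrices `Matrix.circulant c`, i.e. the
matrices fixed by simultaneously translating rows and columns by any `g : G`. Conjugation
`M ↦ Pᵀ M P` commutes with such a translation, and the translation-invariance of the law of `P`
lets us reindex the average over `ι`, so the mean-square operator maps translation-invariant
matrices to translation-invariant ones.
-/

namespace Matrix

variable {n α : Type*}

theorem exists_eq_circulant_iff_submatrix_subRight [AddGroup n] {M : Matrix n n α} :
    (∃ c, M = circulant c) ↔ ∀ g, M.submatrix (Equiv.subRight g) (Equiv.subRight g) = M := by
  constructor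
  · rintro ⟨c, rfl⟩ g
    ext h k
    simp only [submatrix_apply, circulant_apply, Equiv.subRight_apply, sub_sub_sub_cancel_right]
  · intro hM
    refine ⟨fun d => M d 0, ext fun h k => ?_⟩
    calc M h k = M.submatrix (Equiv.subRight k) (Equiv.subRight k) h k := by rw [hM]
      _ = M (h - k) 0 := by simp only [submatrix_apply, Equiv.subRight_apply, sub_self]

variable {ι : Type*} [Fintype ι] [Fintype n] [Semiring α]

def meanSquareOperator (w : ι → α) (P : ι → Matrix n n α) (M : Matrix n n α) : Matrix n n α :=
  ∑ i, w i • ((P i)ᵀ * M * P i)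

theorem meanSquareOperator_submatrix_equiv (w : ι → α) (P : ι → Matrix n n α)
    (M : Matrix n n α) (e : n ≃ n) :
    (meanSquareOperator w P M).submatrix e e =
      meanSquareOperator w (fun i => (P i).submatrix e e) (M.submatrix e e) := by
  ext h k
  simp only [meanSquareOperator, submatrix_apply, sum_apply, smul_apply, transpose_submatrix,
    submatrix_mul_equiv]

theorem meanSquareOperator_comp_perm (w : ι → α) (P : ι → Matrix n n α) (M : Matrix n n α)
    (σ : Equiv.Perm ι) :
    meanSquareOperator (w ∘ σ) (P ∘ σ) M = meanSquareOperator w P M :=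
  Equiv.sum_comp σ fun i => w i • ((P i)ᵀ * M * P i)

theorem meanSquareOperator_submatrix_eq_of_perm (w : ι → α) (P : ι → Matrix n n α)
    (M : Matrix n n α) (e : n ≃ n) (hM : M.submatrix e e = M) (σ : Equiv.Perm ι)
    (hσ : ∀ i, w (σ i) = w i ∧ P (σ i) = (P i).submatrix e e) :
    (meanSquareOperator w P M).submatrix e e = meanSquareOperator w P M := by
  have hw : w ∘ σ = w := funext fun i => (hσ i).1
  have hP : P ∘ σ = fun i => (P i).submatrix e e := funext fun i => (hσ i).2
  rw [meanSquareOperator_submatrix_equiv, hM, ← hP, ← meanSquareOperator_comp_perm w P M σ, hw]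

end Matrix

theorem cayley_invariance_of_mean_square_operator_general
    {G : Type*} [AddCommGroup G] [Fintype G]
    {ι : Type*} [Fintype ι]
    (w : ι → ℝ) (P : ι → Matrix G G ℝ)
    (hinv : ∀ g : G, ∃ e : Equiv.Perm ι,
      ∀ i, w (e i) = w i ∧ ∀ h k, P (e i) h k = P i (h - g) (k - g))
    (C : Matrix G G ℝ) (hC : ∃ c : G → ℝ, ∀ h g, C h g = c (h - g)) :
    ∃ c' : G → ℝ, ∀ h g, (∑ i, w i • ((P i)ᵀ * C * P i)) h g = c' (h - g) := by
  obtain ⟨c, hc⟩ := hC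
  have hC_inv : ∀ g, C.submatrix (Equiv.subRight g) (Equiv.subRight g) = C :=
    exists_eq_circulant_iff_submatrix_subRight.mp ⟨c, ext hc⟩
  have hL : ∃ c', meanSquareOperator w P C = circulant c' := by
    refine exists_eq_circulant_iff_submatrix_subRight.mpr fun g => ?_
    obtain ⟨σ, hσ⟩ := hinv g
    exact meanSquareOperator_submatrix_eq_of_perm w P C _ (hC_inv g) σ
      fun i => ⟨(hσ i).1, ext (hσ i).2⟩
  obtain ⟨c', hc'⟩ := hL
  exact ⟨c', fun h g => congrFun (congrFun hc' h) g⟩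

/-- If `C` is a Cayley matrix over a finite Abelian group `G` and `𝓛` is the
mean-square operator `𝓛(M) = E[P(t)ᵀ M P(t)]` of a randomized algorithm (such as the BGA
or CBGA on a Cayley graph over `G`) whose random matrix `P(t)` has a distribution
invariant under group translations, then `𝓛(C)` is also a Cayley matrix over `G`. -/
theorem cayley_invariance_of_mean_square_operator
    {G : Type*} [AddCommGroup G] [Fintype G] [DecidableEq G]
    {ι : Type*} [Fintype ι]
    (w : ι → ℝ) (P : ι → Matrix G G ℝ)
    (hw : ∀ i, 0 ≤ w i) (hwsum : ∑ i, w i = 1)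
    (hstoch : ∀ i u, ∑ v, P i u v = 1)
    (hinv : ∀ g : G, ∃ e : Equiv.Perm ι,
      ∀ i, w (e i) = w i ∧ ∀ h k, P (e i) h k = P i (h - g) (k - g))
    (C : Matrix G G ℝ) (hC : ∃ c : G → ℝ, ∀ h g, C h g = c (h - g)) :
    ∃ c' : G → ℝ, ∀ h g, (∑ i, w i • ((P i)ᵀ * C * P i)) h g = c' (h - g) :=
  cayley_invariance_of_mean_square_operator_general w P hinv C hC
end

section
/- Let M be the mean-square recursion matrix of a broadcast gossip algorithm on a G-Cayley graph, defined by M_{uv} = ∑_k E[P(t)_{k+v,u} P(t)_{k,0}]. If almost surely P(t)_{uu} ≥ δ > 0 for all u, then the graph of the adjacency matrix A is contained in the graph of Mᵀ, which is contained in the graph of A + Aᵀ + AᵀA. -/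
/-!
All matrices involved are entrywise nonnegative, so an entry of `M` is nonzero exactly when one
of its terms is: `Mᵀ v u ≠ 0` iff for some realisation `i` of positive weight and some `k`, both
`P i (k + v) u` and `P i k 0` are nonzero. By adaptedness each of these is a self-loop or an edge
of `A`, and translation invariance moves the edge `A k 0` to `A (k + v) v`; the four cases give
`u = v`, `A u v`, `A v u`, or the common in-neighbour `k + v` of `u` and `v`. Conversely, an edge
`A v u` is seen by the `k = 0` term, whose second factor `P i 0 0 ≥ δ` never vanishes.
-/

open Matrix Finset

section NonnegEntries

variable {R : Type*} [Ring R] [LinearOrder R] [IsStrictOrderedRing R]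

theorem Matrix.add_transpose_add_transpose_mul_apply_ne_zero_iff {n : Type*} [Fintype n]
    {A : Matrix n n R} (hA : ∀ u v, 0 ≤ A u v) (v u : n) :
    (A + Aᵀ + Aᵀ * A) v u ≠ 0 ↔ A v u ≠ 0 ∨ A u v ≠ 0 ∨ ∃ x, A x v ≠ 0 ∧ A x u ≠ 0 := by
  have hprod : ∀ x, 0 ≤ A x v * A x u := fun x => mul_nonneg (hA x v) (hA x u)
  simp only [add_apply, transpose_apply, mul_apply, ne_eq,
    add_eq_zero_iff_of_nonneg (add_nonneg (hA v u) (hA u v)) (sum_nonneg fun x _ => hprod x),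
    add_eq_zero_iff_of_nonneg (hA v u) (hA u v),
    Fintype.sum_eq_zero_iff_of_nonneg hprod, funext_iff, Pi.zero_apply, mul_eq_zero,
    not_and_or, not_forall, not_or, or_assoc]

theorem sum_sum_mul_mul_ne_zero_iff {κ ι : Type*} [Fintype κ] [Fintype ι]
    {w : ι → R} {a b : κ → ι → R}
    (hw : ∀ i, 0 ≤ w i) (ha : ∀ k i, 0 ≤ a k i) (hb : ∀ k i, 0 ≤ b k i) :
    ∑ k, ∑ i, w i * (a k i * b k i) ≠ 0 ↔ ∃ k i, w i ≠ 0 ∧ a k i ≠ 0 ∧ b k i ≠ 0 := by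
  have hterm : ∀ k i, 0 ≤ w i * (a k i * b k i) := fun k i =>
    mul_nonneg (hw i) (mul_nonneg (ha k i) (hb k i))
  simp only [ne_eq, Fintype.sum_eq_zero_iff_of_nonneg (fun k => sum_nonneg fun i _ => hterm k i),
    Fintype.sum_eq_zero_iff_of_nonneg (hterm _), funext_iff, Pi.zero_apply]
  push Not
  simp only [mul_ne_zero_iff]

end NonnegEntries

theorem msa_matrix_graph_inclusions_general
    {G : Type*} [AddCommGroup G] [Fintype G] [DecidableEq G]
    {ι : Type*} [Fintype ι]
    (w : ι → ℝ) (P : ι → Matrix G G ℝ) (A : Matrix G G ℝ)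
    (hw : ∀ i, 0 ≤ w i)
    (hA01 : ∀ u v, A u v = 0 ∨ A u v = 1)
    (hshift : ∀ h g k : G, A (h + k) (g + k) = A h g)
    (hPnn : ∀ i u v, 0 ≤ P i u v)
    (hadapt : ∀ i u v, P i u v ≠ 0 → u = v ∨ A u v ≠ 0)
    (δ : ℝ) (hδ : 0 < δ) (hdiag : ∀ i u, δ ≤ P i u u)
    (hmean : ∀ u v, u ≠ v → A u v ≠ 0 → 0 < ∑ i, w i * P i u v)
    (M : Matrix G G ℝ)
    (hM : ∀ u v, M u v = ∑ k, ∑ i, w i * (P i (k + v) u * P i k 0)) :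
    (∀ u v : G, u ≠ v → A v u ≠ 0 → Mᵀ v u ≠ 0) ∧
    (∀ u v : G, u ≠ v → Mᵀ v u ≠ 0 → (A + Aᵀ + Aᵀ * A) v u ≠ 0) := by
  have hA : ∀ u v, 0 ≤ A u v := fun u v => by rcases hA01 u v with h | h <;> simp [h]
  have hM_ne_zero (u v : G) :
      Mᵀ v u ≠ 0 ↔ ∃ k i, w i ≠ 0 ∧ P i (k + v) u ≠ 0 ∧ P i k 0 ≠ 0 := by
    rw [transpose_apply, hM]
    exact sum_sum_mul_mul_ne_zero_iff hw (fun _ _ => hPnn _ _ _) (fun _ _ => hPnn _ _ _)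
  refine ⟨fun u v huv hAvu => ?_, fun u v huv hMvu => ?_⟩
  · obtain ⟨i, -, hi⟩ := exists_ne_zero_of_sum_ne_zero (hmean v u (Ne.symm huv) hAvu).ne'
    exact (hM_ne_zero u v).2 ⟨0, i, left_ne_zero_of_mul hi, by simpa using right_ne_zero_of_mul hi,
      (hδ.trans_le (hdiag i 0)).ne'⟩
  · obtain ⟨k, i, -, hku, hk0⟩ := (hM_ne_zero u v).1 hMvu
    have hkv : A (k + v) v = A k 0 := by simpa using hshift k 0 v
    rw [add_transpose_add_transpose_mul_apply_ne_zero_iff hA]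
    rcases hadapt i _ _ hku with hku | hku <;> rcases hadapt i _ _ hk0 with rfl | hk0
    · exact absurd (by simpa using hku) huv.symm
    · exact Or.inr (Or.inl (hku ▸ hkv ▸ hk0))
    · exact Or.inl (by simpa using hku)
    · exact Or.inr (Or.inr ⟨k + v, hkv ▸ hk0, hku⟩)

/-- Let `M` be the mean-square recursion matrix of a broadcast gossip
algorithm on a `G`-Cayley graph, `M_{uv} = ∑_k E[P(t)_{k+v,u} P(t)_{k,0}]`, where `P(t)`
is a random stochastic matrix adapted to `A + I` with translation-invariant graph,
whose expected matrix is supported on the edges of `A`, and with `P(t)_{uu} ≥ δ > 0`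
almost surely. Then the graph of `A` is contained in the graph of `Mᵀ` (i.e. for
`u ≠ v`, `A v u ≠ 0 → Mᵀ v u ≠ 0`), which in turn is contained in the graph of
`A + Aᵀ + AᵀA`. -/
theorem msa_matrix_graph_inclusions
    {G : Type*} [AddCommGroup G] [Fintype G] [DecidableEq G]
    {ι : Type*} [Fintype ι]
    (w : ι → ℝ) (P : ι → Matrix G G ℝ) (A : Matrix G G ℝ)
    (hw : ∀ i, 0 ≤ w i) (hwsum : ∑ i, w i = 1)
    (hA01 : ∀ u v, A u v = 0 ∨ A u v = 1)
    (hAdiag : ∀ u, A u u = 0)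
    (hshift : ∀ h g k : G, A (h + k) (g + k) = A h g)
    (hPnn : ∀ i u v, 0 ≤ P i u v)
    (hPstoch : ∀ i u, ∑ v, P i u v = 1)
    (hadapt : ∀ i u v, P i u v ≠ 0 → u = v ∨ A u v ≠ 0)
    (δ : ℝ) (hδ : 0 < δ) (hdiag : ∀ i u, δ ≤ P i u u)
    (hmean : ∀ u v, u ≠ v → A u v ≠ 0 → 0 < ∑ i, w i * P i u v)
    (M : Matrix G G ℝ)
    (hM : ∀ u v, M u v = ∑ k, ∑ i, w i * (P i (k + v) u * P i k 0)) :
    (∀ u v : G, u ≠ v → A v u ≠ 0 → Mᵀ v u ≠ 0) ∧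
    (∀ u v : G, u ≠ v → Mᵀ v u ≠ 0 → (A + Aᵀ + Aᵀ * A) v u ≠ 0) :=
  msa_matrix_graph_inclusions_general w P A hw hA01 hshift hPnn hadapt δ hδ hdiag hmean M hM
end
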